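/- arXiv:2107.06699 — 6 statements merged into one kernel-verified Lean document; each statement's English description precedes it below -/
import Mathlib

section
/- Autonomous radial dynamics for the underwater bank: let a > b > 0, let γ, h be nonzero real constants and set 𝔥 = h². Let (ρ(t), φ(t), u(t), v(t)) be a differentiable solution of the Hamilton equations for the polar Hamiltonian 𝓗 on an open interval I, with ρ(t) > 0 and (u(t), v(t)) ≠ (0,0), such that v ≡ γ and 𝓗 ≡ γ/h along the solution. Then for all t ∈ I: (ρ(t) ρ̇(t))² · (ρ(t)² + a)² = (ρ(t)² + b) · (ρ(t)²(ρ(t)² + a) − (ρ(t)² + b)𝔥). -/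
/-- The underwater-bank Hamiltonian in polar coordinates
`𝓗(ρ, φ, u, v) = √(u² + v²/ρ²) · √((ρ² + b)/(ρ² + a))` (independent of `φ`). -/
noncomputable def polarH (a b ρ φ u v : ℝ) : ℝ :=
  Real.sqrt (u ^ 2 + v ^ 2 / ρ ^ 2) * Real.sqrt ((ρ ^ 2 + b) / (ρ ^ 2 + a))

open Real

lemma polarH_pos {a b ρ φ u v : ℝ} (hρ : ρ ≠ 0) (hv : v ≠ 0) (ha : 0 < ρ ^ 2 + a)
    (hb : 0 < ρ ^ 2 + b) : 0 < polarH a b ρ φ u v := by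
  unfold polarH
  positivity

lemma hasDerivAt_polarH_momentum (a b ρ φ v : ℝ) {u : ℝ} (hS : u ^ 2 + v ^ 2 / ρ ^ 2 ≠ 0) :
    HasDerivAt (fun q => polarH a b ρ φ q v)
      (u / √(u ^ 2 + v ^ 2 / ρ ^ 2) * √((ρ ^ 2 + b) / (ρ ^ 2 + a))) u := by
  have hsq : HasDerivAt (fun q : ℝ => q ^ 2 + v ^ 2 / ρ ^ 2) (2 * u) u := by
    simpa using (hasDerivAt_pow 2 u).add_const (v ^ 2 / ρ ^ 2)
  refine ((hsq.sqrt hS).mul_const _).congr_deriv ?_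
  ring

/-- With `s = √(u² + γ²/ρ²)` and `r = √((ρ² + b)/(ρ² + a))`, Hamilton's equation gives
`ρ̇ = u r / s`; eliminating `u` and `s` through the energy level `s r = γ/h` leaves
`ρ̇² = r² - r⁴h²/ρ²`. -/
lemma radial_velocity_identity {a b ρ u γ h s r : ℝ} (hρ : ρ ≠ 0) (ha : ρ ^ 2 + a ≠ 0)
    (hs : s ≠ 0) (hh : h ≠ 0) (hs2 : s ^ 2 = u ^ 2 + γ ^ 2 / ρ ^ 2)
    (hr2 : r ^ 2 = (ρ ^ 2 + b) / (ρ ^ 2 + a)) (hsr : s * r = γ / h) :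
    (ρ * (u / s * r)) ^ 2 * (ρ ^ 2 + a) ^ 2
      = (ρ ^ 2 + b) * (ρ ^ 2 * (ρ ^ 2 + a) - (ρ ^ 2 + b) * h ^ 2) := by
  have hr : r ^ 2 * (ρ ^ 2 + a) = ρ ^ 2 + b := by
    rw [hr2]; field_simp
  have hs' : s ^ 2 * ρ ^ 2 = u ^ 2 * ρ ^ 2 + γ ^ 2 := by
    rw [hs2]; field_simp
  have hsrh : s ^ 2 * r ^ 2 * h ^ 2 = γ ^ 2 := by
    rw [← mul_pow, hsr]; field_simp
  field_simp
  linear_combination (ρ ^ 2 * u ^ 2 * (ρ ^ 2 + a) - s ^ 2 * h ^ 2 * (ρ ^ 2 + b)) * hr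
    - (ρ ^ 2 + a) * (ρ ^ 2 + b) * hs' + (ρ ^ 2 + a) * (ρ ^ 2 + b) * hsrh

theorem bank_autonomous_radial_dynamics_general (a b γ h : ℝ) (hab : a > b) (hb : b > 0)
    (hγ : γ ≠ 0) (𝔥 : ℝ) (h𝔥 : 𝔥 = h ^ 2)
    (t₁ t₂ : ℝ) (ρ φ u v : ℝ → ℝ)
    (hρpos : ∀ t ∈ Set.Ioo t₁ t₂, ρ t > 0)
    (hρ : ∀ t ∈ Set.Ioo t₁ t₂, HasDerivAt ρ
      (deriv (fun q => polarH a b (ρ t) (φ t) q (v t)) (u t)) t)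
    (hvγ : ∀ t ∈ Set.Ioo t₁ t₂, v t = γ)
    (hlevel : ∀ t ∈ Set.Ioo t₁ t₂, polarH a b (ρ t) (φ t) (u t) (v t) = γ / h) :
    ∀ t ∈ Set.Ioo t₁ t₂,
      (ρ t * deriv ρ t) ^ 2 * (ρ t ^ 2 + a) ^ 2
        = (ρ t ^ 2 + b) * (ρ t ^ 2 * (ρ t ^ 2 + a) - (ρ t ^ 2 + b) * 𝔥) := by
  intro t ht
  have hρt : 0 < ρ t := hρpos t ht
  have hat : 0 < ρ t ^ 2 + a := by positivity [hb.trans hab]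
  have hbt : 0 < ρ t ^ 2 + b := by positivity
  have hlev := hlevel t ht
  rw [hvγ t ht] at hlev
  have hh : h ≠ 0 := by
    rintro rfl
    exact (polarH_pos hρt.ne' hγ hat hbt).ne' (by simpa using hlev)
  have hS : u t ^ 2 + γ ^ 2 / ρ t ^ 2 ≠ 0 := by positivity
  have hρt' := hρ t ht
  rw [hvγ t ht, (hasDerivAt_polarH_momentum a b (ρ t) (φ t) γ hS).deriv] at hρt'
  rw [hρt'.deriv, h𝔥]
  exact radial_velocity_identity hρt.ne' hat.ne' (sqrt_ne_zero'.2 (by positivity)) hh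
    (sq_sqrt (by positivity)) (sq_sqrt (by positivity)) hlev

/-- Autonomous radial dynamics for the underwater bank: along a solution with `v ≡ γ`
and `𝓗 ≡ γ/h`, setting `𝔥 = h²`, the radius satisfies
`(ρρ̇)²(ρ² + a)² = (ρ² + b)(ρ²(ρ² + a) − (ρ² + b)𝔥)`. -/
theorem bank_autonomous_radial_dynamics (a b γ h : ℝ) (hab : a > b) (hb : b > 0)
    (hγ : γ ≠ 0) (hh : h ≠ 0) (𝔥 : ℝ) (h𝔥 : 𝔥 = h ^ 2)
    (t₁ t₂ : ℝ) (ρ φ u v : ℝ → ℝ)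
    (hρpos : ∀ t ∈ Set.Ioo t₁ t₂, ρ t > 0)
    (huv : ∀ t ∈ Set.Ioo t₁ t₂, (u t, v t) ≠ (0, 0))
    (hρ : ∀ t ∈ Set.Ioo t₁ t₂, HasDerivAt ρ
      (deriv (fun q => polarH a b (ρ t) (φ t) q (v t)) (u t)) t)
    (hφ : ∀ t ∈ Set.Ioo t₁ t₂, HasDerivAt φ
      (deriv (fun q => polarH a b (ρ t) (φ t) (u t) q) (v t)) t)
    (hu : ∀ t ∈ Set.Ioo t₁ t₂, HasDerivAt u
      (-(deriv (fun q => polarH a b q (φ t) (u t) (v t)) (ρ t))) t)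
    (hv : ∀ t ∈ Set.Ioo t₁ t₂, HasDerivAt v
      (-(deriv (fun q => polarH a b (ρ t) q (u t) (v t)) (φ t))) t)
    (hvγ : ∀ t ∈ Set.Ioo t₁ t₂, v t = γ)
    (hlevel : ∀ t ∈ Set.Ioo t₁ t₂, polarH a b (ρ t) (φ t) (u t) (v t) = γ / h) :
    ∀ t ∈ Set.Ioo t₁ t₂,
      (ρ t * deriv ρ t) ^ 2 * (ρ t ^ 2 + a) ^ 2
        = (ρ t ^ 2 + b) * (ρ t ^ 2 * (ρ t ^ 2 + a) - (ρ t ^ 2 + b) * 𝔥) :=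
  bank_autonomous_radial_dynamics_general a b γ h hab hb hγ 𝔥 h𝔥 t₁ t₂ ρ φ u v hρpos hρ hvγ hlevel
end

section
/- Parametric verification of the bank radial solution: let a > b > 0 and 𝔥 ∈ ℝ, and set δ = (𝔥 + 2a − b)/3, α = (4/3)(𝔥² − 2(a − 2b)𝔥 + a² − ab + b²), β = (4/27)(𝔥 − a + 2b)(2𝔥² − 4(a − 2b)𝔥 + (2a − b)(a + b)). Let P : I → ℝ be differentiable on an open interval I with (P'(𝔭))² = 4P(𝔭)³ − αP(𝔭) − β, P(𝔭) + δ − a > 0, and P(𝔭) + δ > 0 for all 𝔭 ∈ I; let t : I → ℝ be differentiable with t'(𝔭) = P(𝔭) + δ. Define ρ(𝔭) = √(P(𝔭) + δ − a) and the derivative with respect to time dρ/dt := ρ'(𝔭)/t'(𝔭). Then for all 𝔭 ∈ I: (ρ · dρ/dt)² · (ρ² + a)² = (ρ² + b) · (ρ²(ρ² + a) − (ρ² + b)𝔥). -/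
/-!
Since `ρ² = P + δ − a`, we have `ρ ρ' = P'/2` and `ρ² + a = P + δ = t'`, so the left-hand side
reduces to `(P')²/4`. The constants `δ, α, β` are exactly those for which the Weierstrass cubic
`4P³ − αP − β`, rewritten in the variable `ρ² = P + δ − a`, becomes
`4 (ρ² + b)(ρ²(ρ² + a) − (ρ² + b)𝔥)`.
-/

/-- The radial coordinate `ρ(𝔭) = √(P(𝔭) + δ − a)` of the bank solution. -/
noncomputable def ρfun (P : ℝ → ℝ) (δ a : ℝ) : ℝ → ℝ :=
  fun 𝔭 => Real.sqrt (P 𝔭 + δ - a)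

theorem weierstrass_cubic_eq_bank_cubic {a b 𝔥 δ α β : ℝ}
    (hδ : δ = (𝔥 + 2 * a - b) / 3)
    (hα : α = (4 / 3) * (𝔥 ^ 2 - 2 * (a - 2 * b) * 𝔥 + a ^ 2 - a * b + b ^ 2))
    (hβ : β = (4 / 27) * (𝔥 - a + 2 * b) *
      (2 * 𝔥 ^ 2 - 4 * (a - 2 * b) * 𝔥 + (2 * a - b) * (a + b)))
    (p : ℝ) :
    4 * p ^ 3 - α * p - β =
      4 * ((p + δ - a) + b) * ((p + δ - a) * (p + δ) - ((p + δ - a) + b) * 𝔥) := by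
  subst hδ hα hβ
  ring

theorem sqrt_mul_deriv_sqrt {f : ℝ → ℝ} {f' x : ℝ} (hf : HasDerivAt f f' x) (hx : 0 < f x) :
    √(f x) * deriv (fun y => √(f y)) x = f' / 2 := by
  have hsqrt : √(f x) ≠ 0 := (Real.sqrt_pos.mpr hx).ne'
  rw [(hf.sqrt hx.ne').deriv]
  field_simp

theorem bank_radial_solution_param_general (a b 𝔥 δ α β : ℝ)
    (hδ : δ = (𝔥 + 2 * a - b) / 3)
    (hα : α = (4 / 3) * (𝔥 ^ 2 - 2 * (a - 2 * b) * 𝔥 + a ^ 2 - a * b + b ^ 2))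
    (hβ : β = (4 / 27) * (𝔥 - a + 2 * b) *
      (2 * 𝔥 ^ 2 - 4 * (a - 2 * b) * 𝔥 + (2 * a - b) * (a + b)))
    (𝔭₁ 𝔭₂ : ℝ) (P P' : ℝ → ℝ)
    (hP : ∀ 𝔭 ∈ Set.Ioo 𝔭₁ 𝔭₂, HasDerivAt P (P' 𝔭) 𝔭)
    (hPW : ∀ 𝔭 ∈ Set.Ioo 𝔭₁ 𝔭₂, (P' 𝔭) ^ 2 = 4 * (P 𝔭) ^ 3 - α * P 𝔭 - β)
    (hPa : ∀ 𝔭 ∈ Set.Ioo 𝔭₁ 𝔭₂, P 𝔭 + δ - a > 0)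
    (hPδ : ∀ 𝔭 ∈ Set.Ioo 𝔭₁ 𝔭₂, P 𝔭 + δ > 0) :
    ∀ 𝔭 ∈ Set.Ioo 𝔭₁ 𝔭₂,
      (ρfun P δ a 𝔭 * (deriv (ρfun P δ a) 𝔭 / (P 𝔭 + δ))) ^ 2
          * (ρfun P δ a 𝔭 ^ 2 + a) ^ 2
        = (ρfun P δ a 𝔭 ^ 2 + b) *
          (ρfun P δ a 𝔭 ^ 2 * (ρfun P δ a 𝔭 ^ 2 + a) - (ρfun P δ a 𝔭 ^ 2 + b) * 𝔥) := by
  intro 𝔭 h𝔭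
  have hρρ' : ρfun P δ a 𝔭 * deriv (ρfun P δ a) 𝔭 = P' 𝔭 / 2 :=
    sqrt_mul_deriv_sqrt (((hP 𝔭 h𝔭).add_const δ).sub_const a) (hPa 𝔭 h𝔭)
  have hρsq : ρfun P δ a 𝔭 ^ 2 = P 𝔭 + δ - a := Real.sq_sqrt (hPa 𝔭 h𝔭).le
  have ht' : P 𝔭 + δ ≠ 0 := (hPδ 𝔭 h𝔭).ne'
  have hcubic := weierstrass_cubic_eq_bank_cubic hδ hα hβ (P 𝔭)
  rw [← mul_div_assoc, hρρ', hρsq, sub_add_cancel]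
  field_simp
  linear_combination hPW 𝔭 h𝔭 + hcubic

/-- Parametric verification of the bank radial solution: if `P` satisfies the
Weierstrass differential equation `(P')² = 4P³ − αP − β` (with the bank constants
`δ, α, β`) and time is related to the parameter by `t' = P + δ`, then
`ρ = √(P + δ − a)`, with `dρ/dt := ρ'(𝔭)/t'(𝔭)`, satisfies the autonomous radial
equation `(ρ·dρ/dt)²(ρ² + a)² = (ρ² + b)(ρ²(ρ² + a) − (ρ² + b)𝔥)`. -/
theorem bank_radial_solution_param (a b 𝔥 δ α β : ℝ) (hab : a > b) (hb : b > 0)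
    (hδ : δ = (𝔥 + 2 * a - b) / 3)
    (hα : α = (4 / 3) * (𝔥 ^ 2 - 2 * (a - 2 * b) * 𝔥 + a ^ 2 - a * b + b ^ 2))
    (hβ : β = (4 / 27) * (𝔥 - a + 2 * b) *
      (2 * 𝔥 ^ 2 - 4 * (a - 2 * b) * 𝔥 + (2 * a - b) * (a + b)))
    (𝔭₁ 𝔭₂ : ℝ) (P P' T : ℝ → ℝ)
    (hP : ∀ 𝔭 ∈ Set.Ioo 𝔭₁ 𝔭₂, HasDerivAt P (P' 𝔭) 𝔭)
    (hPW : ∀ 𝔭 ∈ Set.Ioo 𝔭₁ 𝔭₂, (P' 𝔭) ^ 2 = 4 * (P 𝔭) ^ 3 - α * P 𝔭 - β)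
    (hPa : ∀ 𝔭 ∈ Set.Ioo 𝔭₁ 𝔭₂, P 𝔭 + δ - a > 0)
    (hPδ : ∀ 𝔭 ∈ Set.Ioo 𝔭₁ 𝔭₂, P 𝔭 + δ > 0)
    (hT : ∀ 𝔭 ∈ Set.Ioo 𝔭₁ 𝔭₂, HasDerivAt T (P 𝔭 + δ) 𝔭) :
    ∀ 𝔭 ∈ Set.Ioo 𝔭₁ 𝔭₂,
      (ρfun P δ a 𝔭 * (deriv (ρfun P δ a) 𝔭 / (P 𝔭 + δ))) ^ 2
          * (ρfun P δ a 𝔭 ^ 2 + a) ^ 2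
        = (ρfun P δ a 𝔭 ^ 2 + b) *
          (ρfun P δ a 𝔭 ^ 2 * (ρfun P δ a 𝔭 ^ 2 + a) - (ρfun P δ a 𝔭 ^ 2 + b) * 𝔥) :=
  bank_radial_solution_param_general a b 𝔥 δ α β hδ hα hβ 𝔭₁ 𝔭₂ P P' hP hPW hPa hPδ
end

section
/- The explicit formulas of Proposition 1 satisfy the conservation law identically: let a > b > 0, ξ > 0, and ψ ∈ ℝ with sin ψ ≠ 0. Set γ = −ξ sin ψ, 𝔥 = ξ²(ξ² + a) sin²ψ/(ξ² + b), δ = (𝔥 + 2a − b)/3, α = (4/3)(𝔥² − 2(a − 2b)𝔥 + a² − ab + b²), β = (4/27)(𝔥 − a + 2b)(2𝔥² − 4(a − 2b)𝔥 + (2a − b)(a + b)). Let P : I → ℝ be differentiable with (P')² = 4P³ − αP − β and P + δ − a > 0 on I. Define ρ = √(P + δ − a), u = −(1/2)·√((ξ² + b)/(ξ² + a)) · P' / ((P + δ − a + b)·√(P + δ − a)), and v = γ. Then for all 𝔭 ∈ I: (u² + v²/ρ²)·(ρ² + b)/(ρ² + a) = γ²/𝔥 = (ξ² + b)/(ξ²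 + a). -/
/-- The momentum `u(𝔭) = −(1/2)·√((ξ² + b)/(ξ² + a))·P'(𝔭)/((P(𝔭) + δ − a + b)·√(P(𝔭) + δ − a))`
of the bank solution of Proposition 1. -/
noncomputable def ufun (P P' : ℝ → ℝ) (δ a b ξ : ℝ) : ℝ → ℝ :=
  fun 𝔭 => -(1 / 2) * Real.sqrt ((ξ ^ 2 + b) / (ξ ^ 2 + a)) * P' 𝔭
    / ((P 𝔭 + δ - a + b) * Real.sqrt (P 𝔭 + δ - a))

/-!
With `R = ρ² = P + δ − a`, the constants `δ, α, β` are chosen exactly so that the Weierstrass cubic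
becomes `4P³ − αP − β = 4R(R + b)(R + a) − 4𝔥(R + b)²`. Since `u²` is `k P'²/(4R(R + b)²)` with
`k = (ξ² + b)/(ξ² + a)` and `γ² = k𝔥`, substituting `P'²` collapses `u² + γ²/R` to `k(R + a)/(R + b)`,
which the factor `(R + b)/(R + a)` turns into `k = γ²/𝔥`.
-/

theorem weierstrass_cubic_eq_shifted {a b 𝔥 δ : ℝ} (hδ : δ = (𝔥 + 2 * a - b) / 3) (p : ℝ) :
    4 * p ^ 3 - (4 / 3) * (𝔥 ^ 2 - 2 * (a - 2 * b) * 𝔥 + a ^ 2 - a * b + b ^ 2) * p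
        - (4 / 27) * (𝔥 - a + 2 * b) * (2 * 𝔥 ^ 2 - 4 * (a - 2 * b) * 𝔥 + (2 * a - b) * (a + b))
      = 4 * (p + δ - a) * (p + δ - a + b) * (p + δ - a + a) - 4 * 𝔥 * (p + δ - a + b) ^ 2 := by
  subst hδ
  ring

theorem conservation_of_shifted_cubic {R a b 𝔥 k q : ℝ} (hR : R ≠ 0) (hRa : R + a ≠ 0)
    (hRb : R + b ≠ 0) (hq : q ^ 2 = 4 * R * (R + b) * (R + a) - 4 * 𝔥 * (R + b) ^ 2) :
    (k * q ^ 2 / (4 * (R + b) ^ 2 * R) + k * 𝔥 / R) * (R + b) / (R + a) = k := by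
  rw [hq]
  field_simp
  ring

theorem ρfun_sq {P : ℝ → ℝ} {δ a 𝔭 : ℝ} (h : 0 ≤ P 𝔭 + δ - a) :
    ρfun P δ a 𝔭 ^ 2 = P 𝔭 + δ - a :=
  Real.sq_sqrt h

theorem ufun_sq {P P' : ℝ → ℝ} {δ a b ξ 𝔭 : ℝ} (h : 0 ≤ P 𝔭 + δ - a)
    (hk : 0 ≤ (ξ ^ 2 + b) / (ξ ^ 2 + a)) :
    ufun P P' δ a b ξ 𝔭 ^ 2
      = (ξ ^ 2 + b) / (ξ ^ 2 + a) * P' 𝔭 ^ 2 / (4 * (P 𝔭 + δ - a + b) ^ 2 * (P 𝔭 + δ - a)) := by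
  simp only [ufun]
  rw [div_pow, mul_pow, mul_pow, mul_pow, Real.sq_sqrt h, Real.sq_sqrt hk]
  field_simp
  ring

theorem prop1_formulas_satisfy_conservation_general (a b ξ ψ γ 𝔥 δ α β : ℝ)
    (hab : a > b) (hb : b > 0) (hξ : ξ > 0) (hψ : Real.sin ψ ≠ 0)
    (hγ : γ = -ξ * Real.sin ψ)
    (h𝔥 : 𝔥 = ξ ^ 2 * (ξ ^ 2 + a) * Real.sin ψ ^ 2 / (ξ ^ 2 + b))
    (hδ : δ = (𝔥 + 2 * a - b) / 3)
    (hα : α = (4 / 3) * (𝔥 ^ 2 - 2 * (a - 2 * b) * 𝔥 + a ^ 2 - a * b + b ^ 2))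
    (hβ : β = (4 / 27) * (𝔥 - a + 2 * b) *
      (2 * 𝔥 ^ 2 - 4 * (a - 2 * b) * 𝔥 + (2 * a - b) * (a + b)))
    (𝔭₁ 𝔭₂ : ℝ) (P P' : ℝ → ℝ)
    (hPW : ∀ 𝔭 ∈ Set.Ioo 𝔭₁ 𝔭₂, (P' 𝔭) ^ 2 = 4 * (P 𝔭) ^ 3 - α * P 𝔭 - β)
    (hPa : ∀ 𝔭 ∈ Set.Ioo 𝔭₁ 𝔭₂, P 𝔭 + δ - a > 0) :
    ∀ 𝔭 ∈ Set.Ioo 𝔭₁ 𝔭₂,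
      (ufun P P' δ a b ξ 𝔭 ^ 2 + γ ^ 2 / ρfun P δ a 𝔭 ^ 2)
          * (ρfun P δ a 𝔭 ^ 2 + b) / (ρfun P δ a 𝔭 ^ 2 + a) = γ ^ 2 / 𝔥
      ∧ γ ^ 2 / 𝔥 = (ξ ^ 2 + b) / (ξ ^ 2 + a) := by
  intro 𝔭 h𝔭
  have ha : 0 < a := hb.trans hab
  have hR := hPa 𝔭 h𝔭
  have h𝔥_pos : 0 < 𝔥 := by rw [h𝔥]; positivity
  have hγ_sq : γ ^ 2 = (ξ ^ 2 + b) / (ξ ^ 2 + a) * 𝔥 := by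
    rw [hγ, h𝔥]; field_simp
  have hγ_div : γ ^ 2 / 𝔥 = (ξ ^ 2 + b) / (ξ ^ 2 + a) := by
    rw [hγ_sq, mul_div_cancel_right₀ _ h𝔥_pos.ne']
  have hP'_sq : P' 𝔭 ^ 2 = 4 * (P 𝔭 + δ - a) * (P 𝔭 + δ - a + b) * (P 𝔭 + δ - a + a)
      - 4 * 𝔥 * (P 𝔭 + δ - a + b) ^ 2 := by
    rw [hPW 𝔭 h𝔭, hα, hβ]; exact weierstrass_cubic_eq_shifted hδ (P 𝔭)
  refine ⟨?_, hγ_div⟩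
  rw [ufun_sq hR.le (by positivity), ρfun_sq hR.le, hγ_div, hγ_sq]
  exact conservation_of_shifted_cubic hR.ne' (by linarith) (by linarith) hP'_sq

/-- The explicit formulas of Proposition 1 satisfy the conservation law
`(u² + v²/ρ²)(ρ² + b)/(ρ² + a) = γ²/𝔥 = (ξ² + b)/(ξ² + a)` identically. -/
theorem prop1_formulas_satisfy_conservation (a b ξ ψ γ 𝔥 δ α β : ℝ)
    (hab : a > b) (hb : b > 0) (hξ : ξ > 0) (hψ : Real.sin ψ ≠ 0)
    (hγ : γ = -ξ * Real.sin ψ)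
    (h𝔥 : 𝔥 = ξ ^ 2 * (ξ ^ 2 + a) * Real.sin ψ ^ 2 / (ξ ^ 2 + b))
    (hδ : δ = (𝔥 + 2 * a - b) / 3)
    (hα : α = (4 / 3) * (𝔥 ^ 2 - 2 * (a - 2 * b) * 𝔥 + a ^ 2 - a * b + b ^ 2))
    (hβ : β = (4 / 27) * (𝔥 - a + 2 * b) *
      (2 * 𝔥 ^ 2 - 4 * (a - 2 * b) * 𝔥 + (2 * a - b) * (a + b)))
    (𝔭₁ 𝔭₂ : ℝ) (P P' : ℝ → ℝ)
    (hP : ∀ 𝔭 ∈ Set.Ioo 𝔭₁ 𝔭₂, HasDerivAt P (P' 𝔭) 𝔭)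
    (hPW : ∀ 𝔭 ∈ Set.Ioo 𝔭₁ 𝔭₂, (P' 𝔭) ^ 2 = 4 * (P 𝔭) ^ 3 - α * P 𝔭 - β)
    (hPa : ∀ 𝔭 ∈ Set.Ioo 𝔭₁ 𝔭₂, P 𝔭 + δ - a > 0) :
    ∀ 𝔭 ∈ Set.Ioo 𝔭₁ 𝔭₂,
      (ufun P P' δ a b ξ 𝔭 ^ 2 + γ ^ 2 / ρfun P δ a 𝔭 ^ 2)
          * (ρfun P δ a 𝔭 ^ 2 + b) / (ρfun P δ a 𝔭 ^ 2 + a) = γ ^ 2 / 𝔥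
      ∧ γ ^ 2 / 𝔥 = (ξ ^ 2 + b) / (ξ ^ 2 + a) :=
  prop1_formulas_satisfy_conservation_general a b ξ ψ γ 𝔥 δ α β hab hb hξ hψ hγ h𝔥 hδ hα hβ 𝔭₁ 𝔭₂ P
    P' hPW hPa
end

section
/- Parametric verification of the ridge x₁-solution: let a > b > 0 and 𝔥 > 1 with h = √𝔥, and set δ = ((b − a)𝔥 + 3a − 2b)/3, α = (4/3)((b − a)²𝔥² − (b − a)b𝔥 + b²), β = (4/27)((b − a)𝔥 + b)((b − a)𝔥 − 2b)(2(b − a)𝔥 − b). Let P : I → ℝ be differentiable on an open interval I with (P')² = 4P³ − αP − β, P + δ − a > 0, and P + δ > 0 on I; let t : I → ℝ be differentiable with t'(𝔭) = h·(P(𝔭) + δ). Define x₁(𝔭) = −√(P(𝔭) + δ − a) and dx₁/dt := x₁'(𝔭)/t'(𝔭). Then for all 𝔭 ∈ I: 𝔥 · (x₁² + a)² · (x₁ · dx₁/dt)² = x₁² · (x₁² + b) · (𝔥(x₁² + a) − (𝔥 − 1)(x₁² + b)). -/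
/-!
Since `x₁² = ℘ + δ − a`, we have `x₁ · dx₁/d𝔭 = ℘'/2`; with `dt/d𝔭 = h(℘ + δ)` and `h² = 𝔥` the
left-hand side collapses to `(℘')²/4 = ℘³ − α℘/4 − β/4`. The right-hand side is a cubic in
`x₁² = ℘ + δ − a`: `δ` is the shift that removes its quadratic term, and `α`, `β` are then exactly
its remaining coefficients.
-/

/-- The coordinate `x₁(𝔭) = −√(P(𝔭) + δ − a)` of the ridge solution. -/
noncomputable def x1fun (P : ℝ → ℝ) (δ a : ℝ) : ℝ → ℝ :=
  fun 𝔭 => -Real.sqrt (P 𝔭 + δ - a)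

theorem x1fun_mul_deriv {P : ℝ → ℝ} {P' δ a 𝔭 : ℝ} (hP : HasDerivAt P P' 𝔭)
    (hpos : 0 < P 𝔭 + δ - a) :
    x1fun P δ a 𝔭 * deriv (x1fun P δ a) 𝔭 = P' / 2 := by
  have hroot := sqrt_mul_deriv_sqrt ((hP.add_const δ).sub_const a) hpos
  unfold x1fun
  rw [deriv.fun_neg]
  simpa only [neg_mul_neg] using hroot

theorem x1fun_sq {P : ℝ → ℝ} {δ a 𝔭 : ℝ} (hnn : 0 ≤ P 𝔭 + δ - a) :
    x1fun P δ a 𝔭 ^ 2 = P 𝔭 + δ - a := by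
  rw [x1fun, neg_sq, Real.sq_sqrt hnn]

theorem ridge_cubic_eq_weierstrass {a b 𝔥 δ α β : ℝ}
    (hδ : δ = ((b - a) * 𝔥 + 3 * a - 2 * b) / 3)
    (hα : α = (4 / 3) * ((b - a) ^ 2 * 𝔥 ^ 2 - (b - a) * b * 𝔥 + b ^ 2))
    (hβ : β = (4 / 27) * ((b - a) * 𝔥 + b) * ((b - a) * 𝔥 - 2 * b) *
      (2 * (b - a) * 𝔥 - b)) (p : ℝ) :
    4 * ((p + δ - a) * (p + δ - a + b) * (𝔥 * (p + δ - a + a) - (𝔥 - 1) * (p + δ - a + b)))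
      = 4 * p ^ 3 - α * p - β := by
  subst hδ hα hβ
  ring

theorem ridge_x1_solution_param_general (a b 𝔥 h δ α β : ℝ)
    (h𝔥 : 𝔥 > 1) (hh : h = Real.sqrt 𝔥)
    (hδ : δ = ((b - a) * 𝔥 + 3 * a - 2 * b) / 3)
    (hα : α = (4 / 3) * ((b - a) ^ 2 * 𝔥 ^ 2 - (b - a) * b * 𝔥 + b ^ 2))
    (hβ : β = (4 / 27) * ((b - a) * 𝔥 + b) * ((b - a) * 𝔥 - 2 * b) *
      (2 * (b - a) * 𝔥 - b))
    (𝔭₁ 𝔭₂ : ℝ) (P P' : ℝ → ℝ)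
    (hP : ∀ 𝔭 ∈ Set.Ioo 𝔭₁ 𝔭₂, HasDerivAt P (P' 𝔭) 𝔭)
    (hPW : ∀ 𝔭 ∈ Set.Ioo 𝔭₁ 𝔭₂, (P' 𝔭) ^ 2 = 4 * (P 𝔭) ^ 3 - α * P 𝔭 - β)
    (hPa : ∀ 𝔭 ∈ Set.Ioo 𝔭₁ 𝔭₂, P 𝔭 + δ - a > 0)
    (hPδ : ∀ 𝔭 ∈ Set.Ioo 𝔭₁ 𝔭₂, P 𝔭 + δ > 0) :
    ∀ 𝔭 ∈ Set.Ioo 𝔭₁ 𝔭₂,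
      𝔥 * (x1fun P δ a 𝔭 ^ 2 + a) ^ 2
          * (x1fun P δ a 𝔭 * (deriv (x1fun P δ a) 𝔭 / (h * (P 𝔭 + δ)))) ^ 2
        = x1fun P δ a 𝔭 ^ 2 * (x1fun P δ a 𝔭 ^ 2 + b) *
          (𝔥 * (x1fun P δ a 𝔭 ^ 2 + a) - (𝔥 - 1) * (x1fun P δ a 𝔭 ^ 2 + b)) := by
  intro 𝔭 h𝔭
  have hh2 : h ^ 2 = 𝔥 := by rw [hh, Real.sq_sqrt (by linarith)]
  have hh0 : h ≠ 0 := by rw [hh]; positivity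
  have hPδ0 := (hPδ 𝔭 h𝔭).ne'
  rw [← mul_div_assoc, x1fun_mul_deriv (hP 𝔭 h𝔭) (hPa 𝔭 h𝔭), x1fun_sq (hPa 𝔭 h𝔭).le]
  have hlhs : 𝔥 * (P 𝔭 + δ - a + a) ^ 2 * (P' 𝔭 / 2 / (h * (P 𝔭 + δ))) ^ 2 = P' 𝔭 ^ 2 / 4 := by
    field_simp
    linear_combination (-(4 * P' 𝔭 ^ 2 * (P 𝔭 + δ) ^ 2)) * hh2
  rw [hlhs, hPW 𝔭 h𝔭, ← ridge_cubic_eq_weierstrass hδ hα hβ]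
  ring

/-- Parametric verification of the ridge `x₁`-solution: if `P` satisfies the
Weierstrass differential equation `(P')² = 4P³ − αP − β` (with the ridge constants
`δ, α, β`) and time is related to the parameter by `t' = h(P + δ)`, then
`x₁ = −√(P + δ − a)`, with `dx₁/dt := x₁'(𝔭)/t'(𝔭)`, satisfies
`𝔥(x₁² + a)²(x₁·dx₁/dt)² = x₁²(x₁² + b)(𝔥(x₁² + a) − (𝔥 − 1)(x₁² + b))`. -/
theorem ridge_x1_solution_param (a b 𝔥 h δ α β : ℝ) (hab : a > b) (hb : b > 0)
    (h𝔥 : 𝔥 > 1) (hh : h = Real.sqrt 𝔥)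
    (hδ : δ = ((b - a) * 𝔥 + 3 * a - 2 * b) / 3)
    (hα : α = (4 / 3) * ((b - a) ^ 2 * 𝔥 ^ 2 - (b - a) * b * 𝔥 + b ^ 2))
    (hβ : β = (4 / 27) * ((b - a) * 𝔥 + b) * ((b - a) * 𝔥 - 2 * b) *
      (2 * (b - a) * 𝔥 - b))
    (𝔭₁ 𝔭₂ : ℝ) (P P' T : ℝ → ℝ)
    (hP : ∀ 𝔭 ∈ Set.Ioo 𝔭₁ 𝔭₂, HasDerivAt P (P' 𝔭) 𝔭)
    (hPW : ∀ 𝔭 ∈ Set.Ioo 𝔭₁ 𝔭₂, (P' 𝔭) ^ 2 = 4 * (P 𝔭) ^ 3 - α * P 𝔭 - β)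
    (hPa : ∀ 𝔭 ∈ Set.Ioo 𝔭₁ 𝔭₂, P 𝔭 + δ - a > 0)
    (hPδ : ∀ 𝔭 ∈ Set.Ioo 𝔭₁ 𝔭₂, P 𝔭 + δ > 0)
    (hT : ∀ 𝔭 ∈ Set.Ioo 𝔭₁ 𝔭₂, HasDerivAt T (h * (P 𝔭 + δ)) 𝔭) :
    ∀ 𝔭 ∈ Set.Ioo 𝔭₁ 𝔭₂,
      𝔥 * (x1fun P δ a 𝔭 ^ 2 + a) ^ 2
          * (x1fun P δ a 𝔭 * (deriv (x1fun P δ a) 𝔭 / (h * (P 𝔭 + δ)))) ^ 2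
        = x1fun P δ a 𝔭 ^ 2 * (x1fun P δ a 𝔭 ^ 2 + b) *
          (𝔥 * (x1fun P δ a 𝔭 ^ 2 + a) - (𝔥 - 1) * (x1fun P δ a 𝔭 ^ 2 + b)) :=
  ridge_x1_solution_param_general a b 𝔥 h δ α β h𝔥 hh hδ hα hβ 𝔭₁ 𝔭₂ P P' hP hPW hPa hPδ
end

section
/- Transverse velocity formula for the underwater ridge: let a > b > 0, 𝔥 > 1, h = √𝔥, and γ > 0. Let (x(t), p(t)) be a differentiable curve on an open interval I with p(t) ≠ 0, satisfying Hamilton's equations ẋᵢ = ∂H/∂pᵢ, ṗᵢ = −∂H/∂xᵢ for the ridge Hamiltonian H, and suppose p₂(t) ≡ γ and H(x(t), p(t)) ≡ γh/√(𝔥 − 1) along the curve. Then for all t ∈ I: ẋ₂(t) = √(1 − 𝔥⁻¹) · (x₁(t)² + b)/(x₁(t)² + a). -/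
/-! Hamilton's equation gives `ẋ₂ = ∂H/∂p₂ = p₂ c / |p|` with `c = √((x₁² + b)/(x₁² + a))`, and since
`H = |p| c` this is `p₂ c² / H`. On the level `p₂ = γ`, `H = γh/√(𝔥 − 1)` the factor `γ` cancels and
`√(𝔥 − 1)/h = √(1 − 𝔥⁻¹)`. -/

noncomputable def ridgeH (a b x₁ x₂ p₁ p₂ : ℝ) : ℝ :=
  Real.sqrt (p₁ ^ 2 + p₂ ^ 2) * Real.sqrt ((x₁ ^ 2 + b) / (x₁ ^ 2 + a))

theorem hasDerivAt_ridgeH_p₂ {a b x₁ x₂ p₁ p₂ : ℝ} (hH : ridgeH a b x₁ x₂ p₁ p₂ ≠ 0) :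
    HasDerivAt (fun q => ridgeH a b x₁ x₂ p₁ q)
      (p₂ * ((x₁ ^ 2 + b) / (x₁ ^ 2 + a)) / ridgeH a b x₁ x₂ p₁ p₂) p₂ := by
  set c := Real.sqrt ((x₁ ^ 2 + b) / (x₁ ^ 2 + a))
  obtain ⟨hs, hc⟩ : Real.sqrt (p₁ ^ 2 + p₂ ^ 2) ≠ 0 ∧ c ≠ 0 := mul_ne_zero_iff.mp hH
  have hc_sq : c ^ 2 = (x₁ ^ 2 + b) / (x₁ ^ 2 + a) := Real.sq_sqrt (Real.sqrt_ne_zero'.mp hc).le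
  have hnorm : HasDerivAt (fun q => p₁ ^ 2 + q ^ 2) (2 * p₂) p₂ := by
    simpa using (hasDerivAt_pow 2 p₂).const_add (p₁ ^ 2)
  refine ((hnorm.sqrt (Real.sqrt_ne_zero'.mp hs).ne').mul_const c).congr_deriv ?_
  rw [← hc_sq]
  change _ = p₂ * c ^ 2 / (Real.sqrt (p₁ ^ 2 + p₂ ^ 2) * c)
  field_simp

theorem sqrt_one_sub_inv {𝔥 : ℝ} (h𝔥 : 0 < 𝔥) :
    Real.sqrt (1 - 𝔥⁻¹) = Real.sqrt (𝔥 - 1) / Real.sqrt 𝔥 := by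
  rw [← Real.sqrt_div' _ h𝔥.le, sub_div, div_self h𝔥.ne', one_div]

theorem ridge_transverse_velocity_general (a b 𝔥 h γ : ℝ)
    (h𝔥 : 𝔥 > 1) (hh : h = Real.sqrt 𝔥) (hγ : γ > 0)
    (t₁ t₂ : ℝ) (x₁ x₂ p₁ p₂ : ℝ → ℝ)
    (hx₂ : ∀ t ∈ Set.Ioo t₁ t₂, HasDerivAt x₂
      (deriv (fun q => ridgeH a b (x₁ t) (x₂ t) (p₁ t) q) (p₂ t)) t)
    (hp₂γ : ∀ t ∈ Set.Ioo t₁ t₂, p₂ t = γ)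
    (hlevel : ∀ t ∈ Set.Ioo t₁ t₂,
      ridgeH a b (x₁ t) (x₂ t) (p₁ t) (p₂ t) = γ * h / Real.sqrt (𝔥 - 1)) :
    ∀ t ∈ Set.Ioo t₁ t₂,
      HasDerivAt x₂ (Real.sqrt (1 - 𝔥⁻¹) * ((x₁ t ^ 2 + b) / (x₁ t ^ 2 + a))) t := by
  intro t ht
  have hroot : 0 < Real.sqrt (𝔥 - 1) := Real.sqrt_pos.mpr (by linarith)
  have hh_pos : 0 < h := hh ▸ Real.sqrt_pos.mpr (by linarith)
  have hH : ridgeH a b (x₁ t) (x₂ t) (p₁ t) (p₂ t) ≠ 0 := by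
    rw [hlevel t ht]
    positivity
  convert hx₂ t ht using 1
  rw [(hasDerivAt_ridgeH_p₂ hH).deriv, hlevel t ht, hp₂γ t ht, sqrt_one_sub_inv (by linarith), ← hh]
  field_simp

/-- Transverse velocity formula for the underwater ridge: along a solution with
`p₂ ≡ γ` and `H ≡ γh/√(𝔥 − 1)`, one has `ẋ₂ = √(1 − 𝔥⁻¹)·(x₁² + b)/(x₁² + a)`. -/
theorem ridge_transverse_velocity (a b 𝔥 h γ : ℝ) (hab : a > b) (hb : b > 0)
    (h𝔥 : 𝔥 > 1) (hh : h = Real.sqrt 𝔥) (hγ : γ > 0)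
    (t₁ t₂ : ℝ) (x₁ x₂ p₁ p₂ : ℝ → ℝ)
    (hp : ∀ t ∈ Set.Ioo t₁ t₂, (p₁ t, p₂ t) ≠ (0, 0))
    (hx₁ : ∀ t ∈ Set.Ioo t₁ t₂, HasDerivAt x₁
      (deriv (fun q => ridgeH a b (x₁ t) (x₂ t) q (p₂ t)) (p₁ t)) t)
    (hx₂ : ∀ t ∈ Set.Ioo t₁ t₂, HasDerivAt x₂
      (deriv (fun q => ridgeH a b (x₁ t) (x₂ t) (p₁ t) q) (p₂ t)) t)
    (hp₁ : ∀ t ∈ Set.Ioo t₁ t₂, HasDerivAt p₁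
      (-(deriv (fun q => ridgeH a b q (x₂ t) (p₁ t) (p₂ t)) (x₁ t))) t)
    (hp₂ : ∀ t ∈ Set.Ioo t₁ t₂, HasDerivAt p₂
      (-(deriv (fun q => ridgeH a b (x₁ t) q (p₁ t) (p₂ t)) (x₂ t))) t)
    (hp₂γ : ∀ t ∈ Set.Ioo t₁ t₂, p₂ t = γ)
    (hlevel : ∀ t ∈ Set.Ioo t₁ t₂,
      ridgeH a b (x₁ t) (x₂ t) (p₁ t) (p₂ t) = γ * h / Real.sqrt (𝔥 - 1)) :
    ∀ t ∈ Set.Ioo t₁ t₂,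
      HasDerivAt x₂ (Real.sqrt (1 - 𝔥⁻¹) * ((x₁ t ^ 2 + b) / (x₁ t ^ 2 + a))) t :=
  ridge_transverse_velocity_general a b 𝔥 h γ h𝔥 hh hγ t₁ t₂ x₁ x₂ p₁ p₂ hx₂ hp₂γ hlevel
end

section
/- Parametric verification of the ridge x₂-formula: let a > b > 0, 𝔥 > 1, h = √𝔥, and set δ = ((b − a)𝔥 + 3a − 2b)/3, α = (4/3)((b − a)²𝔥² − (b − a)b𝔥 + b²), β = (4/27)((b − a)𝔥 + b)((b − a)𝔥 − 2b)(2(b − a)𝔥 − b). Let P : I → ℝ be differentiable with (P')² = 4P³ − αP − β, P + δ − a > 0 and P + δ > 0 on I; let t : I → ℝ be differentiable with t'(𝔭) = h·(P(𝔭) + δ), fix 𝔭₀ ∈ I, and define x₁(𝔭)² = P(𝔭) + δ − a and x₂(𝔭) = √(1 − 𝔥⁻¹) · t(𝔭) + √(𝔥 − 1)·(b − a)·(𝔭 − 𝔭₀). Then for all 𝔭 ∈ I: x₂'(𝔭)/t'(𝔭) = √(1 − 𝔥⁻¹) · (x₁(𝔭)² + b)/(x₁(𝔭)² + a); that is, x₂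 as a function of time satisfies ẋ₂ = √(1 − 𝔥⁻¹)(x₁² + b)/(x₁² + a). -/
/- Since `t' = h (P + δ)` and `√(𝔥 − 1) = √(1 − 𝔥⁻¹) · h`, the derivative of `x₂` is
`√(1 − 𝔥⁻¹) · h · (P + δ + b − a)`; dividing by `t'` and writing `P + δ = x₁² + a` gives the
claim. -/

/-- The squared coordinate `x₁(𝔭)² = P(𝔭) + δ − a` of the ridge solution. -/
noncomputable def x1sq (P : ℝ → ℝ) (δ a : ℝ) : ℝ → ℝ :=
  fun 𝔭 => P 𝔭 + δ - a

/-- The coordinate `x₂(𝔭) = √(1 − 𝔥⁻¹)·t(𝔭) + √(𝔥 − 1)(b − a)(𝔭 − 𝔭₀)` of the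
ridge solution of Proposition 2. -/
noncomputable def x2fun (T : ℝ → ℝ) (𝔥 b a 𝔭₀ : ℝ) : ℝ → ℝ :=
  fun 𝔭 => Real.sqrt (1 - 𝔥⁻¹) * T 𝔭 + Real.sqrt (𝔥 - 1) * (b - a) * (𝔭 - 𝔭₀)

theorem Real.sqrt_sub_one_eq_sqrt_one_sub_inv_mul_sqrt {x : ℝ} (hx : 0 < x) :
    √(x - 1) = √(1 - x⁻¹) * √x := by
  rw [← Real.sqrt_mul' _ hx.le, sub_mul, inv_mul_cancel₀ hx.ne', one_mul]

theorem hasDerivAt_x2fun {T : ℝ → ℝ} {T' p : ℝ} (𝔥 b a 𝔭₀ : ℝ) (hT : HasDerivAt T T' p) :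
    HasDerivAt (x2fun T 𝔥 b a 𝔭₀) (√(1 - 𝔥⁻¹) * T' + √(𝔥 - 1) * (b - a)) p :=
  ((hT.const_mul _).add (((hasDerivAt_id p).sub_const 𝔭₀).const_mul _)).congr_deriv
    (by rw [mul_one])

theorem x1sq_add (P : ℝ → ℝ) (δ a p : ℝ) : x1sq P δ a p + a = P p + δ :=
  sub_add_cancel _ _

theorem ridge_x2_solution_param_general (a b 𝔥 h δ : ℝ)
    (h𝔥 : 𝔥 > 1) (hh : h = Real.sqrt 𝔥)
    (𝔭₁ 𝔭₂ : ℝ) (P T : ℝ → ℝ)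
    (hPδ : ∀ 𝔭 ∈ Set.Ioo 𝔭₁ 𝔭₂, P 𝔭 + δ > 0)
    (hT : ∀ 𝔭 ∈ Set.Ioo 𝔭₁ 𝔭₂, HasDerivAt T (h * (P 𝔭 + δ)) 𝔭)
    (𝔭₀ : ℝ) :
    ∀ 𝔭 ∈ Set.Ioo 𝔭₁ 𝔭₂,
      deriv (x2fun T 𝔥 b a 𝔭₀) 𝔭 / (h * (P 𝔭 + δ))
        = Real.sqrt (1 - 𝔥⁻¹) * ((x1sq P δ a 𝔭 + b) / (x1sq P δ a 𝔭 + a)) := by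
  intro 𝔭 h𝔭
  have h𝔥₀ : 0 < 𝔥 := one_pos.trans h𝔥
  have hh₀ : 0 < h := hh ▸ Real.sqrt_pos.mpr h𝔥₀
  have hPδ₀ := hPδ 𝔭 h𝔭
  rw [(hasDerivAt_x2fun 𝔥 b a 𝔭₀ (hT 𝔭 h𝔭)).deriv,
    Real.sqrt_sub_one_eq_sqrt_one_sub_inv_mul_sqrt h𝔥₀, ← hh, x1sq_add, x1sq]
  field_simp
  ring

/-- Parametric verification of the ridge `x₂`-formula: with time related to the
parameter by `t'(𝔭) = h(P(𝔭) + δ)`, the function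
`x₂(𝔭) = √(1 − 𝔥⁻¹)·t(𝔭) + √(𝔥 − 1)(b − a)(𝔭 − 𝔭₀)` satisfies
`x₂'(𝔭)/t'(𝔭) = √(1 − 𝔥⁻¹)·(x₁² + b)/(x₁² + a)` where `x₁² = P + δ − a`;
i.e. as a function of time it satisfies `ẋ₂ = √(1 − 𝔥⁻¹)(x₁² + b)/(x₁² + a)`. -/
theorem ridge_x2_solution_param (a b 𝔥 h δ α β : ℝ) (hab : a > b) (hb : b > 0)
    (h𝔥 : 𝔥 > 1) (hh : h = Real.sqrt 𝔥)
    (hδ : δ = ((b - a) * 𝔥 + 3 * a - 2 * b) / 3)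
    (hα : α = (4 / 3) * ((b - a) ^ 2 * 𝔥 ^ 2 - (b - a) * b * 𝔥 + b ^ 2))
    (hβ : β = (4 / 27) * ((b - a) * 𝔥 + b) * ((b - a) * 𝔥 - 2 * b) *
      (2 * (b - a) * 𝔥 - b))
    (𝔭₁ 𝔭₂ : ℝ) (P P' T : ℝ → ℝ)
    (hP : ∀ 𝔭 ∈ Set.Ioo 𝔭₁ 𝔭₂, HasDerivAt P (P' 𝔭) 𝔭)
    (hPW : ∀ 𝔭 ∈ Set.Ioo 𝔭₁ 𝔭₂, (P' 𝔭) ^ 2 = 4 * (P 𝔭) ^ 3 - α * P 𝔭 - β)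
    (hPa : ∀ 𝔭 ∈ Set.Ioo 𝔭₁ 𝔭₂, P 𝔭 + δ - a > 0)
    (hPδ : ∀ 𝔭 ∈ Set.Ioo 𝔭₁ 𝔭₂, P 𝔭 + δ > 0)
    (hT : ∀ 𝔭 ∈ Set.Ioo 𝔭₁ 𝔭₂, HasDerivAt T (h * (P 𝔭 + δ)) 𝔭)
    (𝔭₀ : ℝ) (h𝔭₀ : 𝔭₀ ∈ Set.Ioo 𝔭₁ 𝔭₂) :
    ∀ 𝔭 ∈ Set.Ioo 𝔭₁ 𝔭₂,
      deriv (x2fun T 𝔥 b a 𝔭₀) 𝔭 / (h * (P 𝔭 + δ))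
        = Real.sqrt (1 - 𝔥⁻¹) * ((x1sq P δ a 𝔭 + b) / (x1sq P δ a 𝔭 + a)) :=
  ridge_x2_solution_param_general a b 𝔥 h δ h𝔥 hh 𝔭₁ 𝔭₂ P T hPδ hT 𝔭₀
end
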